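/- Let W be a finite set of Wang tiles. If W tiles ℤ², then the tiling formula ψ_W is not valid on the semilattice frame (𝒫_fin(ℕ), ∪, ∅); that is, there is a semilattice model over (𝒫_fin(ℕ), ∪, ∅) in which ∅ does not satisfy ψ_W. -/

import Mathlib

/-- Formulas of the language 𝓛: propositional letters (indexed by ℕ) with ∧, ∨, →. -/
inductive Fml : Type
  | atom : ℕ → Fml
  | and : Fml → Fml → Fml
  | or : Fml → Fml → Fml
  | imp : Fml → Fml → Fml
deriving DecidableEq

/-- A Wang tile: a quadruple `(t_W, t_E, t_N, t_S)` of natural numbers. -/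
abbrev Tile : Type := ℕ × ℕ × ℕ × ℕ

/-- West colour. -/
def tW (t : Tile) : ℕ := t.1
/-- East colour. -/
def tE (t : Tile) : ℕ := t.2.1
/-- North colour. -/
def tN (t : Tile) : ℕ := t.2.2.1
/-- South colour. -/
def tS (t : Tile) : ℕ := t.2.2.2

/-- `W` tiles `D ⊆ ℤ²`: there is a map assigning to each point of `D` a tile of `W`
such that horizontally and vertically adjacent tiles within `D` match. -/
def Tiles (W : Finset Tile) (D : Set (ℤ × ℤ)) : Prop :=
  ∃ τ : ℤ × ℤ → Tile,
    (∀ p ∈ D, τ p ∈ W) ∧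
    (∀ m n : ℤ, (m, n) ∈ D → (m + 1, n) ∈ D → tE (τ (m, n)) = tW (τ (m + 1, n))) ∧
    (∀ m n : ℤ, (m, n) ∈ D → (m, n + 1) ∈ D → tN (τ (m, n)) = tS (τ (m, n + 1)))

/-- The `k`-quadrant `ℚ(k) = {(m,n) : 0 ≤ m,n ≤ k}`. -/
def Quadrant (k : ℕ) : Set (ℤ × ℤ) :=
  {p | 0 ≤ p.1 ∧ p.1 ≤ (k : ℤ) ∧ 0 ≤ p.2 ∧ p.2 ≤ (k : ℤ)}

/-- The `k`-octant `𝕆(k) = {(m,n) : 0 ≤ m ≤ n ≤ k}`. -/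
def Octant (k : ℕ) : Set (ℤ × ℤ) :=
  {p | 0 ≤ p.1 ∧ p.1 ≤ p.2 ∧ p.2 ≤ (k : ℤ)}

/-- The propositional letters used in the tiling formulas: one letter `𝚝` for each
tile `t`, letters `𝚖_{i,j}` for `i,j ∈ {0,1}` (here indexed by `Bool`, `false = 0`,
`true = 1`), and letters `𝚡`, `𝚢`, `𝚙⊤`. -/
inductive Letter : Type
  | tile : Tile → Letter
  | m : Bool → Bool → Letter
  | x : Letter
  | y : Letter
  | pTop : Letter
deriving DecidableEq

/-- Disjunction of a list of formulas (a given default for the empty list). -/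
def bigOr (dflt : Fml) : List Fml → Fml
  | [] => dflt
  | f :: fs => fs.foldl .or f

/-- Conjunction of a list of formulas (a given default for the empty list). -/
def bigAnd (dflt : Fml) : List Fml → Fml
  | [] => dflt
  | f :: fs => fs.foldl .and f

/-- Product of two lists. -/
def listProd {α β : Type*} (l₁ : List α) (l₂ : List β) : List (α × β) :=
  l₁.foldr (fun a acc => (l₂.map fun b => (a, b)) ++ acc) []

/-- The four pairs `(i,j)` with `i,j ∈ {0,1}`. -/
def boolPairs : List (Bool × Bool) :=
  [(false, false), (false, true), (true, false), (true, true)]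

variable (enc : Letter → ℕ)

/-- The atom `𝚝` for a tile `t`. -/
def tAt (t : Tile) : Fml := .atom (enc (.tile t))
/-- The atom `𝚖_{i,j}`. -/
def mAt (i j : Bool) : Fml := .atom (enc (.m i j))
/-- The atom `𝚡`. -/
def xAt : Fml := .atom (enc .x)
/-- The atom `𝚢`. -/
def yAt : Fml := .atom (enc .y)
/-- The atom `𝚙⊤`. -/
def pAt : Fml := .atom (enc .pTop)

/-- The surrogate used for an empty disjunction: `𝚖_{0,0} ∧ 𝚖_{0,1}`. -/
def emptyOr : Fml := .and (mAt enc false false) (mAt enc false true)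

/-- The surrogate used for an empty conjunction: `𝚙⊤ → 𝚙⊤`. -/
def emptyAnd : Fml := .imp (pAt enc) (pAt enc)

/-- `R(t) = ⋁{𝚝' : t' ∈ W, t_E = t'_W}`: the permissible rightwards neighbours. -/
noncomputable def Rt (W : Finset Tile) (t : Tile) : Fml :=
  bigOr (emptyOr enc) (((W.filter fun t' => tE t = tW t').toList).map (tAt enc))

/-- `U(t) = ⋁{𝚝' : t' ∈ W, t_N = t'_S}`: the permissible upwards neighbours. -/
noncomputable def Ut (W : Finset Tile) (t : Tile) : Fml :=
  bigOr (emptyOr enc) (((W.filter fun t' => tN t = tS t').toList).map (tAt enc))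

/-- The grid formula `G_{i,j}`. -/
noncomputable def Gf (W : Finset Tile) (i j : Bool) : Fml :=
  .and (mAt enc i j)
    (bigOr (emptyOr enc)
      ((W.toList).map fun t =>
        .and (tAt enc t)
          (.imp (yAt enc)
            (.or (mAt enc i j) (.and (mAt enc i (!j)) (Ut enc W t))))))

/-- The formula `x'`. -/
noncomputable def xPrime (W : Finset Tile) : Fml :=
  .and (xAt enc) <| .and (pAt enc) <| .and (.imp (pAt enc) (pAt enc)) <|
    .and (bigAnd (emptyAnd enc)
        ((listProd (W.toList) boolPairs).map fun q =>
          .imp (.and (mAt enc q.2.1 q.2.2) (tAt enc q.1))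
            (.or (mAt enc q.2.1 q.2.2) (.and (mAt enc (!q.2.1) q.2.2) (Rt enc W q.1))))) <|
      .and (bigAnd (emptyAnd enc)
          ((listProd boolPairs boolPairs).filterMap fun q =>
            if q.1 ≠ q.2 then
              some (.imp (.and (mAt enc q.1.1 q.1.2) (mAt enc q.2.1 q.2.2))
                (.and (mAt enc false false) (mAt enc false true)))
            else none))
        (bigAnd (emptyAnd enc)
          ((listProd (W.toList) (W.toList)).filterMap fun q =>
            if q.1 ≠ q.2 then
              some (.imp (.and (tAt enc q.1) (tAt enc q.2))
                (.and (mAt enc false false) (mAt enc false true)))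
            else none))

/-- The formula `y' = 𝚢 ∧ 𝚙⊤ ∧ (𝚙⊤ → 𝚙⊤)`. -/
def yPrime : Fml := .and (yAt enc) (.and (pAt enc) (.imp (pAt enc) (pAt enc)))

/-- The notational complement `m^c_{i,j} = 𝚖_{i,1−j} ∨ 𝚖_{1−i,j} ∨ 𝚖_{1−i,1−j}`. -/
def mc (i j : Bool) : Fml :=
  .or (mAt enc i (!j)) (.or (mAt enc (!i) j) (mAt enc (!i) (!j)))

/-- The formula `α = ⋀_{i,j} (m^c_{i,j} → m^c_{i,j})`. -/
def alphaF : Fml :=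
  bigAnd (emptyAnd enc) (boolPairs.map fun q => .imp (mc enc q.1 q.2) (mc enc q.1 q.2))

/-- The formula `β₁ = ⋀_{i} ((y' → m^c_{i,i}) → m^c_{i,1−i})`. -/
def beta1F : Fml :=
  .and (.imp (.imp (yPrime enc) (mc enc false false)) (mc enc false true))
    (.imp (.imp (yPrime enc) (mc enc true true)) (mc enc true false))

/-- The formula `β₂ = ⋀_{i} ((x' → m^c_{1−i,i}) → m^c_{i,i})`. -/
noncomputable def beta2F (W : Finset Tile) : Fml :=
  .and (.imp (.imp (xPrime enc W) (mc enc true false)) (mc enc false false))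
    (.imp (.imp (xPrime enc W) (mc enc false true)) (mc enc true true))

/-- The formula `γ = 𝚙⊤ → ⋁_{i,j} G_{i,j}`. -/
noncomputable def gammaF (W : Finset Tile) : Fml :=
  .imp (pAt enc) (bigOr (emptyOr enc) (boolPairs.map fun q => Gf enc W q.1 q.2))

/-- The tiling formula `ψ_W = (α ∧ β₁ ∧ β₂ ∧ γ ∧ G_{0,0}) → (x' → m^c_{1,0})`. -/
noncomputable def psiW (W : Finset Tile) : Fml :=
  .imp
    (.and (alphaF enc) (.and (beta1F enc) (.and (beta2F enc W)
      (.and (gammaF enc W) (Gf enc W false false)))))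
    (.imp (xPrime enc W) (mc enc true false))

/-- Satisfaction in a semilattice model `(S, ⊔, V)`: the implication clause is
`x ⊩ φ → ψ` iff for all `y`, `y ⊩ φ` implies `x ⊔ y ⊩ ψ`. -/
def SatS {S : Type*} (sup : S → S → S) (V : ℕ → Set S) : S → Fml → Prop
  | x, .atom p => x ∈ V p
  | x, .and φ ψ => SatS sup V x φ ∧ SatS sup V x ψ
  | x, .or φ ψ => SatS sup V x φ ∨ SatS sup V x ψ
  | x, .imp φ ψ => ∀ y, SatS sup V y φ → SatS sup V (sup x y) ψ

namespace TilingAux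

/-- number of even elements -/
def xc (Z : Finset ℕ) : ℕ := (Z.filter fun n => n % 2 = 0).card
/-- number of odd elements -/
def yc (Z : Finset ℕ) : ℕ := (Z.filter fun n => ¬ n % 2 = 0).card

lemma xc_insert_even {Z : Finset ℕ} {e : ℕ} (he : e % 2 = 0) (hne : e ∉ Z) :
    xc (insert e Z) = xc Z + 1 := by
  unfold xc
  rw [Finset.filter_insert, if_pos he, Finset.card_insert_of_notMem]
  simp [Finset.mem_filter, hne]

lemma yc_insert_even {Z : Finset ℕ} {e : ℕ} (he : e % 2 = 0) :
    yc (insert e Z) = yc Z := by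
  unfold yc
  rw [Finset.filter_insert, if_neg (by simp [he])]

lemma xc_insert_odd {Z : Finset ℕ} {o : ℕ} (ho : ¬ o % 2 = 0) :
    xc (insert o Z) = xc Z := by
  unfold xc
  rw [Finset.filter_insert, if_neg ho]

lemma yc_insert_odd {Z : Finset ℕ} {o : ℕ} (ho : ¬ o % 2 = 0) (hne : o ∉ Z) :
    yc (insert o Z) = yc Z + 1 := by
  unfold yc
  rw [Finset.filter_insert, if_pos ho, Finset.card_insert_of_notMem]
  simp [Finset.mem_filter, hne]

lemma xc_singleton_even {e : ℕ} (he : e % 2 = 0) : xc ({e} : Finset ℕ) = 1 := by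
  simp [xc, Finset.filter_singleton, he]

lemma yc_singleton_even {e : ℕ} (he : e % 2 = 0) : yc ({e} : Finset ℕ) = 0 := by
  simp [yc, Finset.filter_singleton, he]

lemma xc_singleton_odd {o : ℕ} (ho : ¬ o % 2 = 0) : xc ({o} : Finset ℕ) = 0 := by
  simp [xc, Finset.filter_singleton, ho]

lemma yc_singleton_odd {o : ℕ} (ho : ¬ o % 2 = 0) : yc ({o} : Finset ℕ) = 1 := by
  simp only [yc, Finset.filter_singleton, if_pos ho, Finset.card_singleton]

lemma exists_fresh_even (Z : Finset ℕ) : ∃ e, e % 2 = 0 ∧ e ∉ Z := by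
  refine ⟨2 * (Z.sup id + 1), by omega, fun h => ?_⟩
  have := Finset.le_sup (f := id) h
  simp only [id] at this; omega

lemma exists_fresh_odd (Z : Finset ℕ) : ∃ o, ¬ o % 2 = 0 ∧ o ∉ Z := by
  refine ⟨2 * (Z.sup id + 1) + 1, by omega, fun h => ?_⟩
  have := Finset.le_sup (f := id) h
  simp only [id] at this; omega

lemma eq_singleton_of_counts {Y : Finset ℕ} (h1 : xc Y = 0) (h2 : yc Y = 1) :
    ∃ o, ¬ o % 2 = 0 ∧ Y = {o} := by
  have hcard : xc Y + yc Y = Y.card :=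
    Finset.card_filter_add_card_filter_not (p := fun n => n % 2 = 0)
  have : Y.card = 1 := by omega
  obtain ⟨o, rfl⟩ := Finset.card_eq_one.mp this
  refine ⟨o, ?_, rfl⟩
  intro ho
  rw [xc_singleton_even ho] at h1; omega

/-- The valuation of letters. -/
def Vl (τ : ℤ × ℤ → Tile) : Letter → Set (Finset ℕ)
  | .tile t => {Z | τ ((xc Z : ℤ), (yc Z : ℤ)) = t}
  | .m i j => {Z | Nat.bodd (xc Z) = i ∧ Nat.bodd (yc Z) = j}
  | .x => {Z | xc Z = 1 ∧ yc Z = 0}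
  | .y => {Z | xc Z = 0 ∧ yc Z = 1}
  | .pTop => Set.univ

/-- The valuation of atoms. -/
def Vv (enc : Letter → ℕ) (τ : ℤ × ℤ → Tile) : ℕ → Set (Finset ℕ) :=
  fun n => {Z | ∃ L, enc L = n ∧ Z ∈ Vl τ L}

variable {enc : Letter → ℕ} {τ : ℤ × ℤ → Tile} {W : Finset Tile}

/-- Abbreviation for satisfaction in our model. -/
abbrev Sat (enc : Letter → ℕ) (τ : ℤ × ℤ → Tile) (Z : Finset ℕ) (f : Fml) : Prop :=
  SatS (fun X Y : Finset ℕ => X ∪ Y) (Vv enc τ) Z f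

lemma sat_atom_intro {Z : Finset ℕ} {L : Letter} (h : Z ∈ Vl τ L) :
    Sat enc τ Z (.atom (enc L)) := ⟨L, rfl, h⟩

lemma sat_atom_iff (henc : Function.Injective enc) {Z : Finset ℕ} {L : Letter} :
    Sat enc τ Z (.atom (enc L)) ↔ Z ∈ Vl τ L := by
  constructor
  · rintro ⟨L', hL', hZ⟩; rwa [henc hL'] at hZ
  · exact sat_atom_intro

lemma sat_p (Z : Finset ℕ) : Sat enc τ Z (pAt enc) :=
  sat_atom_intro (by simp [Vl])

lemma sat_emptyAnd (Z : Finset ℕ) : Sat enc τ Z (emptyAnd enc) := by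
  intro Y _; exact sat_p _

lemma sat_m_iff (henc : Function.Injective enc) {Z : Finset ℕ} {i j : Bool} :
    Sat enc τ Z (mAt enc i j) ↔ (Nat.bodd (xc Z) = i ∧ Nat.bodd (yc Z) = j) :=
  sat_atom_iff henc

lemma sat_mc_iff (henc : Function.Injective enc) {Z : Finset ℕ} {i j : Bool} :
    Sat enc τ Z (mc enc i j) ↔ ¬ (Nat.bodd (xc Z) = i ∧ Nat.bodd (yc Z) = j) := by
  show Sat enc τ Z (.or _ (.or _ _)) ↔ _
  rw [show (Sat enc τ Z (.or (mAt enc i (!j)) (.or (mAt enc (!i) j) (mAt enc (!i) (!j)))))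
      = (Sat enc τ Z (mAt enc i (!j)) ∨ Sat enc τ Z (mAt enc (!i) j)
        ∨ Sat enc τ Z (mAt enc (!i) (!j))) from rfl]
  rw [sat_m_iff henc, sat_m_iff henc, sat_m_iff henc]
  cases hx : Nat.bodd (xc Z) <;> cases hy : Nat.bodd (yc Z) <;> cases i <;> cases j <;> simp

lemma sat_foldl_or {S : Type} (sup : S → S → S) (V : ℕ → Set S) (x : S)
    (l : List Fml) (f : Fml) :
    SatS sup V x (l.foldl .or f) ↔ SatS sup V x f ∨ ∃ g ∈ l, SatS sup V x g := by
  induction l generalizing f with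
  | nil => simp
  | cons a l ih =>
    rw [List.foldl_cons, ih]
    have : SatS sup V x (.or f a) ↔ SatS sup V x f ∨ SatS sup V x a := Iff.rfl
    rw [this]
    simp only [List.mem_cons]
    constructor
    · rintro ((h | h) | ⟨g, hg, h⟩)
      · exact Or.inl h
      · exact Or.inr ⟨a, Or.inl rfl, h⟩
      · exact Or.inr ⟨g, Or.inr hg, h⟩
    · rintro (h | ⟨g, (rfl | hg), h⟩)
      · exact Or.inl (Or.inl h)
      · exact Or.inl (Or.inr h)
      · exact Or.inr ⟨g, hg, h⟩

lemma sat_bigOr_intro {S : Type} {sup : S → S → S} {V : ℕ → Set S} {x : S}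
    {l : List Fml} {f : Fml} (d : Fml) (hf : f ∈ l) (h : SatS sup V x f) :
    SatS sup V x (bigOr d l) := by
  cases l with
  | nil => simp at hf
  | cons a l =>
    show SatS sup V x (l.foldl .or a)
    rw [sat_foldl_or]
    rcases List.mem_cons.mp hf with rfl | hf
    · exact Or.inl h
    · exact Or.inr ⟨f, hf, h⟩

lemma sat_foldl_and {S : Type} (sup : S → S → S) (V : ℕ → Set S) (x : S)
    (l : List Fml) (f : Fml) :
    SatS sup V x (l.foldl .and f) ↔ SatS sup V x f ∧ ∀ g ∈ l, SatS sup V x g := by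
  induction l generalizing f with
  | nil => simp
  | cons a l ih =>
    rw [List.foldl_cons, ih]
    have : SatS sup V x (.and f a) ↔ SatS sup V x f ∧ SatS sup V x a := Iff.rfl
    rw [this]
    simp only [List.mem_cons]
    constructor
    · rintro ⟨⟨h1, h2⟩, h3⟩
      exact ⟨h1, fun g hg => by rcases hg with rfl | hg; exacts [h2, h3 g hg]⟩
    · rintro ⟨h1, h2⟩
      exact ⟨⟨h1, h2 a (Or.inl rfl)⟩, fun g hg => h2 g (Or.inr hg)⟩

lemma sat_bigAnd_intro {S : Type} {sup : S → S → S} {V : ℕ → Set S} {x : S}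
    {l : List Fml} {d : Fml} (hd : SatS sup V x d) (h : ∀ g ∈ l, SatS sup V x g) :
    SatS sup V x (bigAnd d l) := by
  cases l with
  | nil => exact hd
  | cons a l =>
    show SatS sup V x (l.foldl .and a)
    rw [sat_foldl_and]
    exact ⟨h a List.mem_cons_self, fun g hg => h g (List.mem_cons_of_mem a hg)⟩

end TilingAux

namespace TilingAux

variable {enc : Letter → ℕ} {τ : ℤ × ℤ → Tile} {W : Finset Tile}

lemma finset_union_singleton (s : Finset ℕ) (a : ℕ) : s ∪ {a} = insert a s := by
  rw [Finset.insert_eq]; exact Finset.union_comm s {a}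

lemma finset_singleton_union (s : Finset ℕ) (a : ℕ) : {a} ∪ s = insert a s :=
  (Finset.insert_eq a s).symm

lemma mem_listProd {α β : Type*} {l₁ : List α} {l₂ : List β} {p : α × β} :
    p ∈ listProd l₁ l₂ ↔ p.1 ∈ l₁ ∧ p.2 ∈ l₂ := by
  induction l₁ with
  | nil => simp [listProd]
  | cons a l ih =>
    show p ∈ (l₂.map fun b => (a, b)) ++ listProd l l₂ ↔ _
    simp only [List.mem_append, List.mem_map, ih, List.mem_cons]
    obtain ⟨pa, pb⟩ := p
    constructor
    · rintro (⟨b, hb, h⟩ | ⟨h1, h2⟩)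
      · obtain ⟨rfl, rfl⟩ := Prod.mk.injEq .. ▸ h
        simp_all
      · exact ⟨Or.inr h1, h2⟩
    · rintro ⟨(rfl | h1), h2⟩
      · exact Or.inl ⟨pb, h2, rfl⟩
      · exact Or.inr ⟨h1, h2⟩

lemma mem_boolPairs (i j : Bool) : (i, j) ∈ boolPairs := by
  cases i <;> cases j <;> simp [boolPairs]

lemma sat_Ut_intro {Z : Finset ℕ} {t t' : Tile} (ht'W : t' ∈ W)
    (hcol : tN t = tS t') (h : τ ((xc Z : ℤ), (yc Z : ℤ)) = t') :
    Sat enc τ Z (Ut enc W t) := by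
  unfold Ut
  exact sat_bigOr_intro _
    (List.mem_map.mpr ⟨t', Finset.mem_toList.mpr (Finset.mem_filter.mpr ⟨ht'W, hcol⟩), rfl⟩)
    (sat_atom_intro h)

lemma sat_Rt_intro {Z : Finset ℕ} {t t' : Tile} (ht'W : t' ∈ W)
    (hcol : tE t = tW t') (h : τ ((xc Z : ℤ), (yc Z : ℤ)) = t') :
    Sat enc τ Z (Rt enc W t) := by
  unfold Rt
  exact sat_bigOr_intro _
    (List.mem_map.mpr ⟨t', Finset.mem_toList.mpr (Finset.mem_filter.mpr ⟨ht'W, hcol⟩), rfl⟩)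
    (sat_atom_intro h)

lemma sat_yPrime {o : ℕ} (ho : ¬ o % 2 = 0) : Sat enc τ {o} (yPrime enc) :=
  ⟨sat_atom_intro ⟨xc_singleton_odd ho, yc_singleton_odd ho⟩, sat_p _, fun _ _ => sat_p _⟩

lemma sat_G (hτW : ∀ p, τ p ∈ W) (hN : ∀ m n : ℤ, tN (τ (m, n)) = tS (τ (m, n + 1)))
    (henc : Function.Injective enc) (Z : Finset ℕ) :
    Sat enc τ Z (Gf enc W (Nat.bodd (xc Z)) (Nat.bodd (yc Z))) := by
  unfold Gf
  refine ⟨sat_atom_intro ⟨rfl, rfl⟩, ?_⟩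
  apply sat_bigOr_intro _
    (List.mem_map.mpr ⟨τ ((xc Z : ℤ), (yc Z : ℤ)),
      Finset.mem_toList.mpr (hτW _), rfl⟩)
  refine ⟨sat_atom_intro rfl, ?_⟩
  intro Y hY
  obtain ⟨h1, h2⟩ := (sat_atom_iff henc).mp hY
  obtain ⟨o, ho, rfl⟩ := eq_singleton_of_counts h1 h2
  by_cases hm : o ∈ Z
  · beta_reduce
    rw [Finset.union_eq_left.mpr (Finset.singleton_subset_iff.mpr hm)]
    exact Or.inl (sat_atom_intro ⟨rfl, rfl⟩)
  · beta_reduce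
    rw [finset_union_singleton]
    refine Or.inr ⟨sat_atom_intro ⟨?_, ?_⟩, sat_Ut_intro (hτW _) (hN _ _) ?_⟩
    · rw [xc_insert_odd ho]
    · rw [yc_insert_odd ho hm, Nat.bodd_succ]
    · rw [xc_insert_odd ho, yc_insert_odd ho hm]
      push_cast
      ring_nf

lemma sat_xPrime (hτW : ∀ p, τ p ∈ W)
    (hE : ∀ m n : ℤ, tE (τ (m, n)) = tW (τ (m + 1, n)))
    (henc : Function.Injective enc) {e : ℕ} (he : e % 2 = 0) :
    Sat enc τ {e} (xPrime enc W) := by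
  unfold xPrime
  refine ⟨sat_atom_intro ⟨xc_singleton_even he, yc_singleton_even he⟩,
    sat_p _, fun _ _ => sat_p _, ?_, ?_, ?_⟩
  · -- C1 : moving right
    refine sat_bigAnd_intro (sat_emptyAnd _) ?_
    intro g hg
    obtain ⟨⟨t, i, j⟩, hq, rfl⟩ := List.mem_map.mp hg
    have htW : t ∈ W := Finset.mem_toList.mp (mem_listProd.mp hq).1
    intro Z' hZ'
    obtain ⟨hm, ht⟩ := hZ'
    obtain ⟨hi, hj⟩ := (sat_atom_iff henc).mp hm
    have ht' : τ ((xc Z' : ℤ), (yc Z' : ℤ)) = t := (sat_atom_iff henc).mp ht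
    by_cases hme : e ∈ Z'
    · beta_reduce
      rw [Finset.union_eq_right.mpr (Finset.singleton_subset_iff.mpr hme)]
      exact Or.inl (sat_atom_intro ⟨hi, hj⟩)
    · beta_reduce
      rw [finset_singleton_union]
      refine Or.inr ⟨sat_atom_intro ⟨?_, ?_⟩,
        sat_Rt_intro (hτW _) (by rw [← ht']; exact hE _ _) ?_⟩
      · rw [xc_insert_even he hme, Nat.bodd_succ, hi]
      · rw [yc_insert_even he, hj]
      · rw [xc_insert_even he hme, yc_insert_even he]
        push_cast
        ring_nf
  · -- C2 : at most one m-pair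
    refine sat_bigAnd_intro (sat_emptyAnd _) ?_
    intro g hg
    obtain ⟨q, _, hsome⟩ := List.mem_filterMap.mp hg
    by_cases hne : q.1 ≠ q.2
    · rw [if_pos hne, Option.some_inj] at hsome
      subst hsome
      intro Z' hZ'
      obtain ⟨h1, h2⟩ := hZ'
      obtain ⟨ha, hb⟩ := (sat_atom_iff henc).mp h1
      obtain ⟨hc, hd⟩ := (sat_atom_iff henc).mp h2
      exact absurd (Prod.ext (ha ▸ hc.symm) (hb ▸ hd.symm)) (by exact fun h => hne h.symm)
    · rw [if_neg hne] at hsome; exact absurd hsome (by simp)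
  · -- C3 : at most one tile
    refine sat_bigAnd_intro (sat_emptyAnd _) ?_
    intro g hg
    obtain ⟨q, _, hsome⟩ := List.mem_filterMap.mp hg
    by_cases hne : q.1 ≠ q.2
    · rw [if_pos hne, Option.some_inj] at hsome
      subst hsome
      intro Z' hZ'
      obtain ⟨h1, h2⟩ := hZ'
      have ha := (sat_atom_iff henc).mp h1
      have hb := (sat_atom_iff henc).mp h2
      exact absurd (ha ▸ hb.symm) (by exact fun h => hne h.symm)
    · rw [if_neg hne] at hsome; exact absurd hsome (by simp)

lemma sat_alpha : Sat enc τ ∅ (alphaF enc) := by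
  unfold alphaF
  refine sat_bigAnd_intro (sat_emptyAnd _) ?_
  intro g hg
  obtain ⟨⟨i, j⟩, _, rfl⟩ := List.mem_map.mp hg
  intro Z hZ
  beta_reduce
  rwa [Finset.empty_union]

lemma sat_gamma (hτW : ∀ p, τ p ∈ W)
    (hN : ∀ m n : ℤ, tN (τ (m, n)) = tS (τ (m, n + 1)))
    (henc : Function.Injective enc) : Sat enc τ ∅ (gammaF enc W) := by
  unfold gammaF
  intro Z _
  beta_reduce
  rw [Finset.empty_union]
  exact sat_bigOr_intro _
    (List.mem_map.mpr ⟨(Nat.bodd (xc Z), Nat.bodd (yc Z)), mem_boolPairs _ _, rfl⟩)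
    (sat_G hτW hN henc Z)

lemma beta1_aux (henc : Function.Injective enc) (i : Bool) (Z : Finset ℕ)
    (h : Sat enc τ Z (.imp (yPrime enc) (mc enc i i))) :
    Sat enc τ (∅ ∪ Z) (mc enc i (!i)) := by
  rw [Finset.empty_union, sat_mc_iff henc]
  obtain ⟨o, ho, hm⟩ := exists_fresh_odd Z
  have h2 := h {o} (sat_yPrime ho)
  beta_reduce at h2
  rw [finset_union_singleton] at h2
  replace h2 := (sat_mc_iff henc).mp h2
  rintro ⟨ha, hb⟩
  exact h2 ⟨by rw [xc_insert_odd ho, ha],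
    by rw [yc_insert_odd ho hm, Nat.bodd_succ, hb, Bool.not_not]⟩

lemma beta2_aux (hτW : ∀ p, τ p ∈ W)
    (hE : ∀ m n : ℤ, tE (τ (m, n)) = tW (τ (m + 1, n)))
    (henc : Function.Injective enc) (i : Bool) (Z : Finset ℕ)
    (h : Sat enc τ Z (.imp (xPrime enc W) (mc enc (!i) i))) :
    Sat enc τ (∅ ∪ Z) (mc enc i i) := by
  rw [Finset.empty_union, sat_mc_iff henc]
  obtain ⟨e, he, hm⟩ := exists_fresh_even Z
  have h2 := h {e} (sat_xPrime hτW hE henc he)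
  beta_reduce at h2
  rw [finset_union_singleton] at h2
  replace h2 := (sat_mc_iff henc).mp h2
  rintro ⟨ha, hb⟩
  exact h2 ⟨by rw [xc_insert_even he hm, Nat.bodd_succ, ha],
    by rw [yc_insert_even he, hb]⟩

end TilingAux

/-- the second tiling lemma: if `W` tiles `ℤ²`, then the tiling formula
`ψ_W` is not valid on the semilattice frame `(𝒫_fin(ℕ), ∪, ∅)`: some semilattice model
over it refutes `ψ_W` at `∅`. -/
theorem tiling_refutes_psiW (W : Finset Tile) (enc : Letter → ℕ)
    (henc : Function.Injective enc) (htile : Tiles W Set.univ) :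
    ∃ V : ℕ → Set (Finset ℕ),
      ¬ SatS (fun X Y : Finset ℕ => X ∪ Y) V (∅ : Finset ℕ) (psiW enc W) := by
  obtain ⟨τ, hτW', hE', hN'⟩ := htile
  have hτW : ∀ p, τ p ∈ W := fun p => hτW' p trivial
  have hE : ∀ m n : ℤ, tE (τ (m, n)) = tW (τ (m + 1, n)) :=
    fun m n => hE' m n trivial trivial
  have hN : ∀ m n : ℤ, tN (τ (m, n)) = tS (τ (m, n + 1)) :=
    fun m n => hN' m n trivial trivial
  refine ⟨TilingAux.Vv enc τ, fun hsat => ?_⟩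
  have hG00 : TilingAux.Sat enc τ ∅ (Gf enc W false false) := by
    have h := TilingAux.sat_G (W := W) hτW hN henc (∅ : Finset ℕ)
    have hx : TilingAux.xc ∅ = 0 := rfl
    have hy : TilingAux.yc ∅ = 0 := rfl
    rw [hx, hy] at h
    exact h
  have hA : TilingAux.Sat enc τ ∅ (.and (alphaF enc) (.and (beta1F enc) (.and (beta2F enc W)
      (.and (gammaF enc W) (Gf enc W false false))))) := by
    refine ⟨TilingAux.sat_alpha, ⟨?_, ?_⟩, ⟨?_, ?_⟩,
      TilingAux.sat_gamma hτW hN henc, hG00⟩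
    · exact fun Z h => TilingAux.beta1_aux henc false Z h
    · exact fun Z h => TilingAux.beta1_aux henc true Z h
    · exact fun Z h => TilingAux.beta2_aux hτW hE henc false Z h
    · exact fun Z h => TilingAux.beta2_aux hτW hE henc true Z h
  have h1 := hsat ∅ hA
  beta_reduce at h1
  rw [Finset.empty_union] at h1
  have h2 := h1 {0} (TilingAux.sat_xPrime hτW hE henc (e := 0) rfl)
  beta_reduce at h2
  rw [Finset.empty_union] at h2
  replace h2 := (TilingAux.sat_mc_iff henc).mp h2
  exact h2 ⟨by rw [TilingAux.xc_singleton_even rfl]; rfl,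
    by rw [TilingAux.yc_singleton_even rfl]; rfl⟩
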